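/- arXiv:2405.03843 — 2 statements merged into one kernel-verified Lean document; each statement's English description precedes it below -/
import Mathlib

section
/- Multiplicativity of the zeta series over disjoint unions: let G be a finite group, X a finite G-set, and Y ⊆ X a G-invariant subset. For each n let G_n = G ≀ S_n = G^n ⋊ S_n act on X^n by ((g₁,...,g_n),s)·(x₁,...,x_n) = (g₁ x_{s^{-1}(1)},...,g_n x_{s^{-1}(n)}). Then for all n ≥ 0: χ^{(A)}(X^n, G_n) = Σ_{s=0}^{n} χ^{(A)}(Y^s, G_s) · χ^{(A)}((X∖Y)^{n−s}, G_{n−s}). Equivalently, ζ^{(A)}_{(X,G)}(t) = ζ^{(A)}_{(Y,G)}(t) · ζ^{(A)}_{(X∖Y,G)}(t) as formal power series, where ζ^{(A)}_{(X,G)}(t) = 1 + Σ_{n≥1} χ^{(A)}(X^n,G_n) t^n. -/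
open scoped BigOperators

/-- The `A`-Euler characteristic of an `H`-set `Z`:
`χ^{(A)}(Z,H) = (1/|H|) · Σ_{φ ∈ Hom(A,H)} |Z^{φ(A)}|`. -/
noncomputable def chiA (A H Z : Type*) [Group A] [Group H] [MulAction H Z] : ℚ :=
  (Nat.card H : ℚ)⁻¹ * ∑ᶠ φ : A →* H, (Nat.card {z : Z // ∀ a : A, φ a • z = z} : ℚ)

/-- The wreath product `G ≀ S_n`, as pairs `((g₁,…,g_n), s)` with multiplication
`((g),s)((g'),s') = ((gᵢ g'_{s⁻¹(i)}), ss')`. -/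
@[ext]
structure Wr (G : Type*) (n : ℕ) where
  g : Fin n → G
  s : Equiv.Perm (Fin n)

namespace Wr

variable {G : Type*} [Group G] {n : ℕ}

instance : Mul (Wr G n) :=
  ⟨fun p q => ⟨fun i => p.g i * q.g (p.s⁻¹ i), p.s * q.s⟩⟩

instance : One (Wr G n) := ⟨⟨1, 1⟩⟩

instance : Inv (Wr G n) := ⟨fun p => ⟨fun i => (p.g (p.s i))⁻¹, p.s⁻¹⟩⟩

@[simp] lemma mul_g (p q : Wr G n) : (p * q).g = fun i => p.g i * q.g (p.s⁻¹ i) := rfl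
@[simp] lemma mul_s (p q : Wr G n) : (p * q).s = p.s * q.s := rfl
@[simp] lemma one_g : (1 : Wr G n).g = 1 := rfl
@[simp] lemma one_s : (1 : Wr G n).s = 1 := rfl
@[simp] lemma inv_g (p : Wr G n) : p⁻¹.g = fun i => (p.g (p.s i))⁻¹ := rfl
@[simp] lemma inv_s (p : Wr G n) : p⁻¹.s = p.s⁻¹ := rfl

instance : Group (Wr G n) where
  mul_assoc p q t := by
    ext i
    · simp [mul_assoc, Equiv.Perm.mul_apply]
    · simp [mul_assoc]
  one_mul p := by ext i <;> simp
  mul_one p := by ext i <;> simp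
  inv_mul_cancel p := by
    ext i
    · simp
    · simp

variable {X : Type*} [MulAction G X]

/-- The action of `G ≀ S_n` on `X^n`:
`((g₁,…,g_n),s)·(x₁,…,x_n) = (g₁ x_{s⁻¹(1)},…,g_n x_{s⁻¹(n)})`. -/
instance : SMul (Wr G n) (Fin n → X) :=
  ⟨fun p x => fun i => p.g i • x (p.s⁻¹ i)⟩

@[simp] lemma smul_apply (p : Wr G n) (x : Fin n → X) (i : Fin n) :
    (p • x) i = p.g i • x (p.s⁻¹ i) := rfl

instance : MulAction (Wr G n) (Fin n → X) where
  one_smul x := by funext i; simp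
  mul_smul p q x := by
    funext i
    simp [mul_smul, Equiv.Perm.mul_apply]

end Wr

/-- The action of `G` on a `G`-invariant subset `Y ⊆ X`. -/
def setMulAction {G X : Type*} [Group G] [MulAction G X] (Y : Set X)
    (hY : ∀ (g : G) (x : X), x ∈ Y → g • x ∈ Y) : MulAction G Y where
  smul g y := ⟨g • (y : X), hY g y y.2⟩
  one_smul y := Subtype.ext (one_smul G (y : X))
  mul_smul g h y := Subtype.ext (mul_smul g h (y : X))

/-- The complement of a `G`-invariant subset is `G`-invariant. -/
lemma compl_invariant {G X : Type*} [Group G] [MulAction G X] (Y : Set X)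
    (hY : ∀ (g : G) (x : X), x ∈ Y → g • x ∈ Y) :
    ∀ (g : G) (x : X), x ∈ Yᶜ → g • x ∈ Yᶜ := by
  intro g x hx hmem
  exact hx (by simpa using hY g⁻¹ (g • x) hmem)

/-!
Multiplied by `|G_n|`, `χ^{(A)}(X^n, G_n)` counts the pairs `(φ, x)` of a homomorphism
`φ : A → G ≀ S_n` and a point `x ∈ X^n` fixed by `φ(A)`. As `Y` is `G`-invariant, the permutation
part of each `φ(a)` preserves the set `S` of coordinates at which `x` lies in `Y`; so `φ` factors
through `(G ≀ Sym S) × (G ≀ Sym Sᶜ)` and `(φ, x)` splits into a pair for `Y^S` and one for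
`(X ∖ Y)^{Sᶜ}`. Summing over the `C(n, s)` sets `S` of each size `s` and using
`|G_n| = C(n, s) |G_s| |G_{n-s}|` gives the formula.
-/

open Function

@[ext]
structure Wreath (G ι : Type*) where
  g : ι → G
  s : Equiv.Perm ι

namespace Wreath

variable {G ι κ : Type*}

def equivProd : Wreath G ι ≃ (ι → G) × Equiv.Perm ι :=
  ⟨fun p => (p.g, p.s), fun q => ⟨q.1, q.2⟩, fun _ => rfl, fun _ => rfl⟩

instance [Finite G] [Finite ι] : Finite (Wreath G ι) := .of_equiv _ equivProd.symm

lemma card [Finite ι] :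
    Nat.card (Wreath G ι) = Nat.card G ^ Nat.card ι * (Nat.card ι).factorial := by
  rw [Nat.card_congr equivProd, Nat.card_prod, Nat.card_fun, Nat.card_perm]

variable [Group G]

instance : Mul (Wreath G ι) := ⟨fun p q => ⟨fun i => p.g i * q.g (p.s⁻¹ i), p.s * q.s⟩⟩

instance : One (Wreath G ι) := ⟨⟨1, 1⟩⟩

instance : Inv (Wreath G ι) := ⟨fun p => ⟨fun i => (p.g (p.s i))⁻¹, p.s⁻¹⟩⟩

@[simp] lemma mul_g (p q : Wreath G ι) : (p * q).g = fun i => p.g i * q.g (p.s⁻¹ i) := rfl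
@[simp] lemma mul_s (p q : Wreath G ι) : (p * q).s = p.s * q.s := rfl
@[simp] lemma one_g : (1 : Wreath G ι).g = 1 := rfl
@[simp] lemma one_s : (1 : Wreath G ι).s = 1 := rfl
@[simp] lemma inv_g (p : Wreath G ι) : p⁻¹.g = fun i => (p.g (p.s i))⁻¹ := rfl
@[simp] lemma inv_s (p : Wreath G ι) : p⁻¹.s = p.s⁻¹ := rfl

instance : Group (Wreath G ι) where
  mul_assoc p q t := by ext i <;> simp [mul_assoc, Equiv.Perm.mul_apply]
  one_mul p := by ext i <;> simp
  mul_one p := by ext i <;> simp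
  inv_mul_cancel p := by ext i <;> simp

variable {X : Type*} [MulAction G X]

instance : SMul (Wreath G ι) (ι → X) := ⟨fun p x i => p.g i • x (p.s⁻¹ i)⟩

@[simp] lemma smul_apply (p : Wreath G ι) (x : ι → X) (i : ι) :
    (p • x) i = p.g i • x (p.s⁻¹ i) := rfl

instance : MulAction (Wreath G ι) (ι → X) where
  one_smul x := by funext i; simp
  mul_smul p q x := by funext i; simp [mul_smul, Equiv.Perm.mul_apply]

lemma comp_smul {W : Type*} [MulAction G W] (u : X → W) (hu : ∀ (g : G) x, u (g • x) = g • u x)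
    (p : Wreath G ι) (x : ι → X) : u ∘ (p • x) = p • (u ∘ x) := by
  funext i; simp [hu]

def relabel (e : ι ≃ κ) : Wreath G ι ≃* Wreath G κ where
  toFun p := ⟨p.g ∘ e.symm, e.permCongr p.s⟩
  invFun p := ⟨p.g ∘ e, e.symm.permCongr p.s⟩
  left_inv p := by ext <;> simp
  right_inv p := by ext <;> simp
  map_mul' p q := by ext <;> simp [Equiv.Perm.inv_def, Equiv.permCongr_def, Equiv.Perm.mul_apply]

lemma relabel_smul (e : ι ≃ κ) (p : Wreath G ι) (x : ι → X) :
    relabel e p • (x ∘ e.symm) = (p • x) ∘ e.symm := by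
  funext k; simp [relabel, Equiv.Perm.inv_def, Equiv.permCongr_def]

def sumHom : Wreath G ι × Wreath G κ →* Wreath G (ι ⊕ κ) where
  toFun p := ⟨Sum.elim p.1.g p.2.g, Equiv.Perm.sumCongr p.1.s p.2.s⟩
  map_one' := by ext (_ | _) <;> simp
  map_mul' p q := by ext (_ | _) <;> simp [Equiv.Perm.sumCongr_inv]

lemma sumHom_injective : Injective (sumHom : Wreath G ι × Wreath G κ →* Wreath G (ι ⊕ κ)) := by
  intro p q h
  refine Prod.ext (Wreath.ext ?_ ?_) (Wreath.ext ?_ ?_) <;> ext i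
  · exact congrFun (congrArg Wreath.g h) (.inl i)
  · simpa [sumHom] using Equiv.congr_fun (congrArg Wreath.s h) (.inl i)
  · exact congrFun (congrArg Wreath.g h) (.inr i)
  · simpa [sumHom] using Equiv.congr_fun (congrArg Wreath.s h) (.inr i)

lemma sumHom_smul_sumMap {Y Z : Type*} [MulAction G Y] [MulAction G Z]
    (p : Wreath G ι × Wreath G κ) (y : ι → Y) (z : κ → Z) :
    sumHom p • Sum.map y z = Sum.map (p.1 • y) (p.2 • z) := by
  ext (_ | _) <;> simp [sumHom, Equiv.Perm.sumCongr_inv]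

lemma mem_range_sumHom [Finite ι] [Finite κ] {p : Wreath G (ι ⊕ κ)}
    (h : Set.MapsTo p.s (Set.range Sum.inl) (Set.range Sum.inl)) : p ∈ (sumHom (G := G)).range := by
  obtain ⟨⟨σ, τ⟩, hστ⟩ := Equiv.Perm.mem_sumCongrHom_range_of_perm_mapsTo_inl h
  exact ⟨(⟨p.g ∘ Sum.inl, σ⟩, ⟨p.g ∘ Sum.inr, τ⟩), by ext (_ | _) <;> simp [sumHom, ← hστ]⟩

end Wreath

def Wr.mulEquivWreath {G : Type*} [Group G] {n : ℕ} : Wr G n ≃* Wreath G (Fin n) where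
  toFun p := ⟨p.g, p.s⟩
  invFun p := ⟨p.g, p.s⟩
  left_inv _ := rfl
  right_inv _ := rfl
  map_mul' _ _ := rfl

section FixedPairs

variable (A : Type*) [Group A]

abbrev FixedPairs (H Z : Type*) [Group H] [MulAction H Z] : Type _ :=
  {p : (A →* H) × Z // ∀ a, p.1 a • p.2 = p.2}

instance [Group.FG A] {H : Type*} [Group H] [Finite H] : Finite (A →* H) := by
  obtain ⟨S, hS, hSfin⟩ := Group.fg_iff.mp ‹Group.FG A›
  have : Finite S := hSfin.to_subtype
  exact .of_injective (fun φ : A →* H => fun s : S => φ s) fun φ ψ h =>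
    MonoidHom.eq_of_eqOn_dense hS fun x hx => congrFun h ⟨x, hx⟩

variable {A} {H K Z W : Type*} [Group H] [Group K] [MulAction H Z] [MulAction K W]

lemma chiA_eq_card_fixedPairs [Finite (A →* H)] [Finite Z] :
    chiA A H Z = (Nat.card H : ℚ)⁻¹ * Nat.card (FixedPairs A H Z) := by
  have := Fintype.ofFinite (A →* H)
  have e : FixedPairs A H Z ≃ Σ φ : A →* H, {z : Z // ∀ a, φ a • z = z} :=
    Equiv.subtypeProdEquivSigmaSubtype fun (φ : A →* H) (z : Z) => ∀ a, φ a • z = z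
  rw [chiA, finsum_eq_sum_of_fintype, Nat.card_congr e, Nat.card_sigma]
  push_cast
  rfl

lemma chiA_congr [MulAction H W] (e : Z ≃ W) (he : ∀ (h : H) z, e (h • z) = h • e z) :
    chiA A H Z = chiA A H W := by
  unfold chiA
  congr 1
  refine finsum_congr fun φ => congrArg _ (Nat.card_congr (e.subtypeEquiv fun z => ?_))
  simp [← he]

def FixedPairs.congr (f : H ≃* K) (e : Z ≃ W) (he : ∀ h z, e (h • z) = f h • e z) :
    FixedPairs A H Z ≃ FixedPairs A K W :=
  (f.monoidHomCongrRightEquiv.prodCongr e).subtypeEquiv fun p => by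
    simp [← he]

theorem card_fixedPairs_of_injective {K₁ K₂ M₁ M₂ : Type*} [Group K₁] [Group K₂]
    [MulAction K₁ M₁] [MulAction K₂ M₂] (f : K₁ × K₂ →* H) (hf : Injective f)
    (j : M₁ × M₂ → Z) (hj : Injective j) (hfj : ∀ k m, j (k.1 • m.1, k.2 • m.2) = f k • j m)
    (hrange : ∀ h m, h • j m = j m → h ∈ f.range) :
    Nat.card {t : FixedPairs A H Z // t.1.2 ∈ Set.range j} =
      Nat.card (FixedPairs A K₁ M₁) * Nat.card (FixedPairs A K₂ M₂) := by
  rw [← Nat.card_prod]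
  symm
  refine Nat.card_eq_of_bijective (fun t => ⟨⟨(f.comp (t.1.1.1.prod t.2.1.1),
    j (t.1.1.2, t.2.1.2)), fun a => ?_⟩, _, rfl⟩) ⟨?_, ?_⟩
  · simp only [MonoidHom.comp_apply, MonoidHom.prod_apply]
    rw [← hfj, t.1.2 a, t.2.2 a]
  · intro t u h
    have hψ := (MonoidHom.cancel_left hf).1 (congrArg (fun v => v.1.1.1) h)
    obtain ⟨hm₁, hm₂⟩ := Prod.ext_iff.1 (hj (congrArg (fun v => v.1.1.2) h))
    have hψ₁ := congrArg (MonoidHom.fst K₁ K₂).comp hψ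
    have hψ₂ := congrArg (MonoidHom.snd K₁ K₂).comp hψ
    simp only [MonoidHom.fst_comp_prod, MonoidHom.snd_comp_prod] at hψ₁ hψ₂
    exact Prod.ext (Subtype.ext (Prod.ext hψ₁ hm₁)) (Subtype.ext (Prod.ext hψ₂ hm₂))
  · rintro ⟨⟨⟨φ, x⟩, hx⟩, m, hm⟩
    dsimp only at hm hx
    subst hm
    have hφ : ∀ a, φ a ∈ f.range := fun a => hrange _ _ (hx a)
    set ψ := (MonoidHom.ofInjective hf).symm.toMonoidHom.comp (φ.codRestrict f.range hφ)
    have hfψ : f.comp ψ = φ := by ext a; simp [ψ]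
    have hψ a : ((ψ a).1 • m.1, (ψ a).2 • m.2) = m := hj <| by
      rw [hfj, ← MonoidHom.comp_apply, hfψ, hx]
    refine ⟨(⟨((MonoidHom.fst K₁ K₂).comp ψ, m.1), fun a => congrArg Prod.fst (hψ a)⟩,
      ⟨((MonoidHom.snd K₁ K₂).comp ψ, m.2), fun a => congrArg Prod.snd (hψ a)⟩), ?_⟩
    simp only [MonoidHom.prod_unique, hfψ]

end FixedPairs

lemma mem_range_sumMap_iff {α β Y Z : Type*} {x : α ⊕ β → Y ⊕ Z} :
    x ∈ Set.range (fun m : (α → Y) × (β → Z) => Sum.map m.1 m.2) ↔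
      ∀ c, (x c).isLeft = c.isLeft := by
  refine ⟨?_, fun h => ?_⟩
  · rintro ⟨m, rfl⟩ (_ | _) <;> rfl
  · refine ⟨(fun a => (x (.inl a)).getLeft (by simpa using h (.inl a)),
      fun b => (x (.inr b)).getRight (by simpa using h (.inr b))), funext ?_⟩
    rintro (a | b)
    · exact Sum.inl_getLeft _ _
    · exact Sum.inr_getRight _ _

def FixedPairs.relabel (A : Type*) [Group A] {G ι κ X : Type*} [Group G] [MulAction G X]
    (e : ι ≃ κ) : FixedPairs A (Wreath G ι) (ι → X) ≃ FixedPairs A (Wreath G κ) (κ → X) :=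
  FixedPairs.congr (Wreath.relabel e) (e.arrowCongr (Equiv.refl X))
    fun p x => (Wreath.relabel_smul e p x).symm

section Decomposition

variable {A : Type*} [Group A] {G : Type*} [Group G] {ι κ Y Z : Type*}
  [MulAction G Y] [MulAction G Z]

theorem card_fixedPairs_sumMap [Finite ι] [Finite κ] :
    Nat.card {t : FixedPairs A (Wreath G (ι ⊕ κ)) (ι ⊕ κ → Y ⊕ Z) //
        t.1.2 ∈ Set.range fun m : (ι → Y) × (κ → Z) => Sum.map m.1 m.2} =
      Nat.card (FixedPairs A (Wreath G ι) (ι → Y)) *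
        Nat.card (FixedPairs A (Wreath G κ) (κ → Z)) := by
  refine card_fixedPairs_of_injective Wreath.sumHom Wreath.sumHom_injective _ ?_
    (fun p m => (Wreath.sumHom_smul_sumMap p m.1 m.2).symm) ?_
  · intro m m' h
    exact Prod.ext (funext fun i => Sum.inl_injective (congrFun h (.inl i)))
      (funext fun k => Sum.inr_injective (congrFun h (.inr k)))
  · intro p m hp
    refine Wreath.mem_range_sumHom ?_
    rintro _ ⟨i, rfl⟩
    -- the fixed point takes at `p.s (inl i)` a `G`-translate of its value at `inl i`, in `Y`
    have hfix := congrFun hp (p.s (.inl i))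
    rw [Wreath.smul_apply, Equiv.Perm.inv_eq_iff_eq.mpr rfl] at hfix
    rcases h : p.s (.inl i) with j | k
    · exact ⟨j, rfl⟩
    · rw [h] at hfix
      simp at hfix

theorem card_fixedPairs_sum [Group.FG A] [Finite G] [Finite Y] [Finite Z] [Fintype ι]
    [DecidableEq ι] :
    Nat.card (FixedPairs A (Wreath G ι) (ι → Y ⊕ Z)) =
      ∑ S : Finset ι, Nat.card (FixedPairs A (Wreath G S) (S → Y)) *
        Nat.card (FixedPairs A (Wreath G {i // i ∉ S}) ({i // i ∉ S} → Z)) := by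
  let leftPart (t : FixedPairs A (Wreath G ι) (ι → Y ⊕ Z)) : Finset ι :=
    {i | (t.1.2 i).isLeft}
  rw [Nat.card_congr (Equiv.sigmaFiberEquiv leftPart).symm, Nat.card_sigma]
  refine Finset.sum_congr rfl fun S _ => ?_
  let e := Equiv.sumCompl (· ∈ S)
  rw [← card_fixedPairs_sumMap]
  refine Nat.card_congr ((FixedPairs.relabel A e.symm).subtypeEquiv fun t => ?_)
  rw [mem_range_sumMap_iff]
  change _ ↔ ∀ c, (t.1.2 (e c)).isLeft = c.isLeft
  rw [Finset.ext_iff, ← e.forall_congr_right, Sum.forall]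
  simp +contextual [leftPart, e]

end Decomposition

section Wr

variable {A : Type*} [Group A] [Group.FG A] {G : Type*} [Group G] [Finite G]

instance {n : ℕ} : Finite (Wr G n) := .of_equiv _ Wr.mulEquivWreath.symm.toEquiv

lemma chiA_wr_eq_card_fixedPairs (n : ℕ) (Z : Type*) [MulAction G Z] [Finite Z] :
    chiA A (Wr G n) (Fin n → Z) = ((Nat.card G : ℚ) ^ n * n.factorial)⁻¹ *
      Nat.card (FixedPairs A (Wreath G (Fin n)) (Fin n → Z)) := by
  rw [chiA_eq_card_fixedPairs, Nat.card_congr Wr.mulEquivWreath.toEquiv, Wreath.card,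
    Nat.card_congr (FixedPairs.congr Wr.mulEquivWreath (Equiv.refl _) fun _ _ => rfl)]
  simp

theorem chiA_wr_sum {Y Z : Type*} [MulAction G Y] [MulAction G Z] [Finite Y] [Finite Z]
    (n : ℕ) :
    chiA A (Wr G n) (Fin n → Y ⊕ Z) = ∑ s ∈ Finset.range (n + 1),
      chiA A (Wr G s) (Fin s → Y) * chiA A (Wr G (n - s)) (Fin (n - s) → Z) := by
  have hS (S : Finset (Fin n)) :
      Nat.card (FixedPairs A (Wreath G S) (S → Y)) *
        Nat.card (FixedPairs A (Wreath G {i // i ∉ S}) ({i // i ∉ S} → Z)) =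
      Nat.card (FixedPairs A (Wreath G (Fin S.card)) (Fin S.card → Y)) *
        Nat.card (FixedPairs A (Wreath G (Fin (n - S.card))) (Fin (n - S.card) → Z)) := by
    rw [Nat.card_congr (FixedPairs.relabel A
        (Fintype.equivFinOfCardEq (α := S) (n := S.card) (by simp))),
      Nat.card_congr (FixedPairs.relabel A
        (Fintype.equivFinOfCardEq (α := {i // i ∉ S}) (n := n - S.card) (by simp)))]
  rw [chiA_wr_eq_card_fixedPairs, card_fixedPairs_sum, Finset.sum_congr rfl fun S _ => hS S,
    ← Finset.powerset_univ, Finset.sum_powerset_apply_card (f := fun s =>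
      Nat.card (FixedPairs A (Wreath G (Fin s)) (Fin s → Y)) *
        Nat.card (FixedPairs A (Wreath G (Fin (n - s))) (Fin (n - s) → Z))),
    Finset.card_univ, Fintype.card_fin]
  push_cast
  rw [Finset.mul_sum]
  refine Finset.sum_congr rfl fun s hs => ?_
  have hsn : s ≤ n := Nat.lt_succ_iff.mp (Finset.mem_range.mp hs)
  have hpow : (Nat.card G : ℚ) ^ n = (Nat.card G : ℚ) ^ s * (Nat.card G : ℚ) ^ (n - s) := by
    rw [← pow_add, Nat.add_sub_cancel' hsn]
  rw [chiA_wr_eq_card_fixedPairs, chiA_wr_eq_card_fixedPairs, nsmul_eq_mul]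
  push_cast
  rw [Nat.cast_choose ℚ hsn, hpow]
  field_simp

end Wr

/-- Multiplicativity of the zeta series over disjoint unions: for a `G`-invariant
subset `Y ⊆ X` and every `n`,
`χ^{(A)}(X^n, G_n) = Σ_{s=0}^{n} χ^{(A)}(Y^s, G_s) · χ^{(A)}((X∖Y)^{n−s}, G_{n−s})`,
where `G_n = G ≀ S_n` acts on `X^n` coordinatewise (twisted by the permutation);
equivalently `ζ^{(A)}_{(X,G)} = ζ^{(A)}_{(Y,G)} · ζ^{(A)}_{(X∖Y,G)}`. -/
theorem chiA_wreath_multiplicative (A G X : Type*) [Group A] [Group.FG A] [Group G]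
    [Finite G] [MulAction G X] [Finite X] (Y : Set X)
    (hY : ∀ (g : G) (x : X), x ∈ Y → g • x ∈ Y) (n : ℕ) :
    chiA A (Wr G n) (Fin n → X) =
      ∑ s ∈ Finset.range (n + 1),
        (letI := setMulAction Y hY; chiA A (Wr G s) (Fin s → Y)) *
        (letI := setMulAction Yᶜ (compl_invariant Y hY);
          chiA A (Wr G (n - s)) (Fin (n - s) → ↥(Yᶜ))) := by
  classical
  let := setMulAction Y hY
  let := setMulAction Yᶜ (compl_invariant Y hY)
  have hsumCompl (g : G) (c : ↥Y ⊕ ↥Yᶜ) :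
      Equiv.Set.sumCompl Y (g • c) = g • Equiv.Set.sumCompl Y c := by
    rcases c with c | c <;> rfl
  rw [← chiA_congr ((Equiv.refl (Fin n)).arrowCongr (Equiv.Set.sumCompl Y))
    fun p x => Wreath.comp_smul _ hsumCompl (Wr.mulEquivWreath p) x]
  exact chiA_wr_sum n
end

section
/- Key wreath-product counting identity: for finite groups K ⊆ G and every n ≥ 0, χ^{(A)}((G/K)^n, G_n) = χ^{(A)}((K/K)^n, K_n), where G_n = G ≀ S_n acts on (G/K)^n and K_n = K ≀ S_n acts on the one-point set (K/K)^n. In particular χ^{(A)}((G/K)^n, G_n) = |Hom(A, K ≀ S_n)| / |K ≀ S_n|. -/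
open scoped BigOperators

section Aux

/-- Homs from a f.g. group to a finite group form a finite set. -/
lemma finite_monoidHom (A H : Type*) [Group A] [Group.FG A] [Group H] [Finite H] :
    Finite (A →* H) := by
  obtain ⟨S, hS, hfin⟩ := Group.fg_iff.mp ‹Group.FG A›
  haveI : Finite S := hfin
  refine Finite.of_injective (fun φ : A →* H => fun s : S => φ s) ?_
  intro φ ψ h
  refine MonoidHom.eq_of_eqOn_dense hS ?_
  intro a ha
  exact congrFun h ⟨a, ha⟩

/-- Postcomposition with a `MulEquiv` gives an equiv of hom sets. -/
def homCongrRight {A H1 H2 : Type*} [Group A] [Group H1] [Group H2] (e : H1 ≃* H2) :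
    (A →* H1) ≃ (A →* H2) where
  toFun φ := e.toMonoidHom.comp φ
  invFun ψ := e.symm.toMonoidHom.comp ψ
  left_inv φ := by ext a; simp
  right_inv ψ := by ext a; simp

instance {G : Type*} [Group G] [Finite G] {n : ℕ} : Finite (Wr G n) :=
  Finite.of_injective (fun p : Wr G n => (p.g, p.s)) (by
    intro p q h
    have h1 : p.g = q.g := congrArg Prod.fst h
    have h2 : p.s = q.s := congrArg Prod.snd h
    ext i
    · exact congrFun h1 i
    · simp [h2])

lemma chiA_eq_of_transitive {A G X : Type*} [Group A] [Group.FG A] [Group G] [Finite G]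
    [MulAction G X] (x₀ : X) (htrans : ∀ x : X, ∃ g : G, g • x₀ = x) :
    chiA A G X = (Nat.card (A →* MulAction.stabilizer G x₀) : ℚ) /
      (Nat.card (MulAction.stabilizer G x₀) : ℚ) := by
  classical
  haveI : Finite X := Finite.of_surjective (fun g : G => g • x₀) htrans
  haveI : Finite (A →* G) := finite_monoidHom A G
  haveI := Fintype.ofFinite X
  haveI := Fintype.ofFinite (A →* G)
  -- double counting
  have swap : ∑ φ : A →* G, (Nat.card {z : X // ∀ a : A, φ a • z = z} : ℚ)
      = ∑ z : X, (Nat.card {φ : A →* G // ∀ a : A, φ a • z = z} : ℚ) := by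
    simp_rw [Nat.card_eq_fintype_card, Fintype.card_subtype, Finset.card_filter]
    push_cast
    exact Finset.sum_comm
  -- homs fixing z are homs into the stabilizer
  have hz : ∀ z : X, Nat.card {φ : A →* G // ∀ a : A, φ a • z = z}
      = Nat.card (A →* MulAction.stabilizer G x₀) := by
    intro z
    have e1 : {φ : A →* G // ∀ a : A, φ a • z = z} ≃ (A →* MulAction.stabilizer G z) :=
      { toFun := fun φ => (φ.1).codRestrict (MulAction.stabilizer G z) (fun a => φ.2 a)
        invFun := fun ψ => ⟨(MulAction.stabilizer G z).subtype.comp ψ, fun a => (ψ a).2⟩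
        left_inv := fun φ => rfl
        right_inv := fun ψ => rfl }
    have horb : MulAction.orbitRel G X z x₀ := htrans z
    have e2 := MulAction.stabilizerEquivStabilizerOfOrbitRel horb
    exact Nat.card_congr (e1.trans (homCongrRight e2))
  have eX : X ≃ G ⧸ MulAction.stabilizer G x₀ :=
    (Equiv.ofBijective (Subtype.val : MulAction.orbit G x₀ → X)
      ⟨Subtype.val_injective, fun x => ⟨⟨x, MulAction.mem_orbit_iff.mpr (htrans x)⟩, rfl⟩⟩).symm.trans
      (MulAction.orbitEquivQuotientStabilizer G x₀)
  have horbit : (Nat.card X : ℚ) * Nat.card (MulAction.stabilizer G x₀) = Nat.card G := by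
    rw [Nat.card_congr eX]
    exact_mod_cast (Subgroup.card_eq_card_quotient_mul_card_subgroup
      (MulAction.stabilizer G x₀)).symm
  rw [chiA, finsum_eq_sum_of_fintype, swap]
  simp_rw [hz]
  rw [Finset.sum_const, Finset.card_univ, nsmul_eq_mul, ← Nat.card_eq_fintype_card]
  have h1 : (0:ℚ) < Nat.card G := by exact_mod_cast Nat.card_pos
  have h2 : (0:ℚ) < Nat.card (MulAction.stabilizer G x₀) := by exact_mod_cast Nat.card_pos
  rw [inv_mul_eq_div, div_eq_div_iff h1.ne' h2.ne']
  linear_combination (Nat.card (A →* MulAction.stabilizer G x₀) : ℚ) * horbit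

end Aux

/-- Key wreath-product counting identity: for finite groups `K ⊆ G` and every `n`,
`χ^{(A)}((G/K)^n, G_n) = χ^{(A)}((K/K)^n, K_n)`, where `G_n = G ≀ S_n` acts on `(G/K)^n`
and `K_n = K ≀ S_n` acts on the one-point set `(K/K)^n`; in particular it equals
`|Hom(A, K ≀ S_n)|/|K ≀ S_n|`. -/
theorem chiA_wreath_coset (A G : Type*) [Group A] [Group.FG A] [Group G] [Finite G]
    (K : Subgroup G) (n : ℕ) :
    chiA A (Wr G n) (Fin n → G ⧸ K) = chiA A (Wr K n) (Fin n → PUnit) ∧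
    chiA A (Wr G n) (Fin n → G ⧸ K)
      = (Nat.card (A →* Wr K n) : ℚ) / (Nat.card (Wr K n) : ℚ) := by
  classical
  have key : chiA A (Wr G n) (Fin n → G ⧸ K)
      = (Nat.card (A →* Wr K n) : ℚ) / (Nat.card (Wr K n) : ℚ) := by
    set x₀ : Fin n → G ⧸ K := fun _ => ((1 : G) : G ⧸ K) with hx₀
    have hsmul : ∀ g h : G, g • ((h : G ⧸ K)) = ((g * h : G) : G ⧸ K) := fun g h => rfl
    have hone : ∀ g : G, ((g : G ⧸ K) = ((1 : G) : G ⧸ K)) ↔ g ∈ K := by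
      intro g
      rw [QuotientGroup.eq]
      simp
    have htrans : ∀ x : Fin n → G ⧸ K, ∃ p : Wr G n, p • x₀ = x := by
      intro x
      choose g hg using fun i => QuotientGroup.mk_surjective (x i)
      refine ⟨⟨g, 1⟩, funext fun i => ?_⟩
      show g i • ((1 : G) : G ⧸ K) = x i
      rw [hsmul, mul_one, hg i]
    have hmem : ∀ p : Wr G n, p ∈ MulAction.stabilizer (Wr G n) x₀ ↔ ∀ i, p.g i ∈ K := by
      intro p
      rw [MulAction.mem_stabilizer_iff]
      constructor
      · intro h i
        have hi := congrFun h i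
        simp only [Wr.smul_apply, hx₀] at hi
        rw [hsmul, mul_one, hone] at hi
        exact hi
      · intro h
        funext i
        simp only [Wr.smul_apply, hx₀]
        rw [hsmul, mul_one, hone]
        exact h i
    have e : Wr K n ≃* MulAction.stabilizer (Wr G n) x₀ :=
      { toFun := fun p => ⟨⟨fun i => (p.g i : G), p.s⟩, (hmem _).mpr fun i => (p.g i).2⟩
        invFun := fun q => ⟨fun i => ⟨q.1.g i, (hmem _).mp q.2 i⟩, q.1.s⟩
        left_inv := fun p => rfl
        right_inv := fun q => rfl
        map_mul' := fun p q => rfl }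
    rw [chiA_eq_of_transitive x₀ htrans, Nat.card_congr (homCongrRight e).symm,
      Nat.card_congr e.toEquiv.symm]
  have hpt : chiA A (Wr K n) (Fin n → PUnit)
      = (Nat.card (A →* Wr K n) : ℚ) / (Nat.card (Wr K n) : ℚ) := by
    haveI : Finite (A →* Wr K n) := finite_monoidHom _ _
    haveI := Fintype.ofFinite (A →* Wr K n)
    rw [chiA, finsum_eq_sum_of_fintype]
    have h1 : ∀ φ : A →* Wr K n,
        (Nat.card {z : Fin n → PUnit // ∀ a : A, φ a • z = z} : ℚ) = 1 := by
      intro φ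
      haveI : Unique {z : Fin n → PUnit // ∀ a : A, φ a • z = z} :=
        { default := ⟨fun _ => PUnit.unit, fun a => Subsingleton.elim _ _⟩
          uniq := fun z => Subtype.ext (Subsingleton.elim _ _) }
      rw [Nat.card_unique]
      norm_num
    rw [Finset.sum_congr rfl fun φ _ => h1 φ, Finset.sum_const, Finset.card_univ,
      nsmul_eq_mul, mul_one, ← Nat.card_eq_fintype_card, inv_mul_eq_div]
  exact ⟨key.trans hpt.symm, key⟩
end
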